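/- arXiv:1508.05908 — 3 statements merged into one kernel-verified Lean document; each statement's English description precedes it below -/
import Mathlib

section
/- Let C be a monoidal category with unit object 𝟙, and let X, Y be objects of C equipped with an exact pairing: morphisms η : 𝟙 → X ⊗ Y (coevaluation) and ε : Y ⊗ X → 𝟙 (evaluation) satisfying the two triangle (zigzag) identities. Suppose e : 𝟙 → X and f : 𝟙 → Y are morphisms such that η equals the composite 𝟙 ≅ 𝟙 ⊗ 𝟙 → X ⊗ Y of the inverse left unitor with e ⊗ f, and such that the composite 𝟙 ≅ 𝟙 ⊗ 𝟙 → Y ⊗ X → 𝟙 of the inverse left unitor with f ⊗ e and then ε equals the identity of 𝟙. Then e and f are isomorphisms; in particular X and Y are both isomorphic to the unit object 𝟙. -/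
/-!
The inverse of `e` is `X ≅ 𝟙 ⊗ X ⟶ Y ⊗ X ⟶ 𝟙`, built from `f` and `ε`. Precomposed with `e`
it is the composite assumed to be the identity of `𝟙`; postcomposed with `e` it is what the
first zigzag identity becomes once `η` is replaced by `e ⊗ f`, hence the identity of `X`.
The inverse of `f` is obtained symmetrically from `e`, `ε` and the second zigzag identity.
-/

open CategoryTheory MonoidalCategory

section

variable {C : Type*} [Category C] [MonoidalCategory C] {X Y : C}

theorem pointedCoevaluation_leftZigzag (ε : Y ⊗ X ⟶ 𝟙_ C) (e : 𝟙_ C ⟶ X) (f : 𝟙_ C ⟶ Y) :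
    ((λ_ (𝟙_ C)).inv ≫ (e ⊗ₘ f)) ▷ X ≫ (α_ X Y X).hom ≫ X ◁ ε
      = (λ_ X).hom ≫ ((λ_ X).inv ≫ f ▷ X ≫ ε) ≫ e ≫ (ρ_ X).inv := by
  rw [tensorHom_def', comp_whiskerRight, comp_whiskerRight, Category.assoc, Category.assoc,
    associator_naturality_left_assoc, ← whisker_exchange]
  monoidal

theorem pointedCoevaluation_rightZigzag (ε : Y ⊗ X ⟶ 𝟙_ C) (e : 𝟙_ C ⟶ X) (f : 𝟙_ C ⟶ Y) :
    Y ◁ ((λ_ (𝟙_ C)).inv ≫ (e ⊗ₘ f)) ≫ (α_ Y X Y).inv ≫ ε ▷ Y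
      = (ρ_ Y).hom ≫ ((ρ_ Y).inv ≫ Y ◁ e ≫ ε) ≫ f ≫ (λ_ Y).inv := by
  rw [MonoidalCategory.tensorHom_def, MonoidalCategory.whiskerLeft_comp,
    MonoidalCategory.whiskerLeft_comp, Category.assoc, Category.assoc,
    associator_inv_naturality_right_assoc, whisker_exchange]
  monoidal

theorem isIso_of_pointedCoevaluation_left {η : 𝟙_ C ⟶ X ⊗ Y} {ε : Y ⊗ X ⟶ 𝟙_ C}
    (zig : η ▷ X ≫ (α_ X Y X).hom ≫ X ◁ ε = (λ_ X).hom ≫ (ρ_ X).inv)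
    {e : 𝟙_ C ⟶ X} {f : 𝟙_ C ⟶ Y}
    (hη : η = (λ_ (𝟙_ C)).inv ≫ (e ⊗ₘ f))
    (hε : (λ_ (𝟙_ C)).inv ≫ (f ⊗ₘ e) ≫ ε = 𝟙 (𝟙_ C)) : IsIso e := by
  refine ⟨(λ_ X).inv ≫ f ▷ X ≫ ε, ?_, ?_⟩
  · rw [← hε, leftUnitor_inv_naturality_assoc, tensorHom_def', Category.assoc]
  · rw [hη, pointedCoevaluation_leftZigzag] at zig
    rw [← cancel_mono (ρ_ X).inv, ← cancel_epi (λ_ X).hom]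
    simpa using zig

theorem isIso_of_pointedCoevaluation_right {η : 𝟙_ C ⟶ X ⊗ Y} {ε : Y ⊗ X ⟶ 𝟙_ C}
    (zig : Y ◁ η ≫ (α_ Y X Y).inv ≫ ε ▷ Y = (ρ_ Y).hom ≫ (λ_ Y).inv)
    {e : 𝟙_ C ⟶ X} {f : 𝟙_ C ⟶ Y}
    (hη : η = (λ_ (𝟙_ C)).inv ≫ (e ⊗ₘ f))
    (hε : (λ_ (𝟙_ C)).inv ≫ (f ⊗ₘ e) ≫ ε = 𝟙 (𝟙_ C)) : IsIso f := by
  refine ⟨(ρ_ Y).inv ≫ Y ◁ e ≫ ε, ?_, ?_⟩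
  · rw [← hε, unitors_inv_equal, rightUnitor_inv_naturality_assoc, MonoidalCategory.tensorHom_def,
      Category.assoc]
  · rw [hη, pointedCoevaluation_rightZigzag] at zig
    rw [← cancel_mono (λ_ Y).inv, ← cancel_epi (ρ_ Y).hom]
    simpa using zig

end

/-- If `(X, Y)` carry an exact pairing whose coevaluation factors through pointings
`e : 𝟙 → X`, `f : 𝟙 → Y`, and the evaluation pairs the pointings to the identity,
then `e` and `f` are isomorphisms; in particular `X` and `Y` are isomorphic to the
unit object. -/
theorem stmt_5 (C : Type*) [Category C] [MonoidalCategory C] (X Y : C)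
    (η : 𝟙_ C ⟶ X ⊗ Y) (ε : Y ⊗ X ⟶ 𝟙_ C)
    (zig₁ : η ▷ X ≫ (α_ X Y X).hom ≫ X ◁ ε = (λ_ X).hom ≫ (ρ_ X).inv)
    (zig₂ : Y ◁ η ≫ (α_ Y X Y).inv ≫ ε ▷ Y = (ρ_ Y).hom ≫ (λ_ Y).inv)
    (e : 𝟙_ C ⟶ X) (f : 𝟙_ C ⟶ Y)
    (h₁ : η = (λ_ (𝟙_ C)).inv ≫ (e ⊗ₘ f))
    (h₂ : (λ_ (𝟙_ C)).inv ≫ (f ⊗ₘ e) ≫ ε = 𝟙 (𝟙_ C)) :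
    IsIso e ∧ IsIso f ∧ Nonempty (X ≅ 𝟙_ C) ∧ Nonempty (Y ≅ 𝟙_ C) := by
  have := isIso_of_pointedCoevaluation_left zig₁ h₁ h₂
  have := isIso_of_pointedCoevaluation_right zig₂ h₁ h₂
  exact ⟨inferInstance, inferInstance, ⟨(asIso e).symm⟩, ⟨(asIso f).symm⟩⟩
end

section
/- Let K be a field, and let U, V, W be finite-dimensional K-vector spaces with V nonzero. For every K-vector space Z and every K-bilinear map b : Hom_K(V, W) × Hom_K(U, V) → Z that is End_K(V)-balanced, i.e., b(g ∘ e, h) = b(g, e ∘ h) for all e ∈ End_K(V), g ∈ Hom_K(V, W), h ∈ Hom_K(U, V), there exists a unique K-linear map ĥ : Hom_K(U, W) → Z such that ĥ(g ∘ h) = b(g, h) for all g ∈ Hom_K(V, W) and h ∈ Hom_K(U, V). -/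
/-!
Pick `v : V` and a functional `φ` on `V` with `φ v = 1` (possible as `V ≠ 0`), and a basis
`(uᵢ)` of `U` with coordinate functionals `uᵢ*`. Writing `gᵢ(f) := φ(·) • f uᵢ : V → W` and
`hᵢ := uᵢ*(·) • v : U → V`, every `f : U → W` is the sum `∑ᵢ gᵢ(f) ∘ hᵢ` of compositions
through `V`, which forces uniqueness, and `F f := ∑ᵢ b (gᵢ(f)) hᵢ` is the lift: for `f = g ∘ h`
we have `gᵢ(g ∘ h) = g ∘ gᵢ(h)`, so balancing moves `g` out of each summand and the
decomposition of `h` collapses the sum to `b g h`.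
-/

open Module

namespace LinearMap

variable {K U V W : Type*} [CommRing K] [AddCommGroup U] [Module K U] [AddCommGroup V]
  [Module K V] [AddCommGroup W] [Module K W]

theorem comp_smulRight (g : V →ₗ[K] W) (ψ : Dual K U) (v : V) :
    g ∘ₗ ψ.smulRight v = ψ.smulRight (g v) := by
  ext; simp

theorem smulRight_comp_smulRight (φ : Dual K V) (ψ : Dual K U) (v : V) (w : W) :
    φ.smulRight w ∘ₗ ψ.smulRight v = φ v • ψ.smulRight w := by
  ext; simp [smul_smul, mul_comm]

end LinearMap

namespace Module.Basis

variable {K U V W ι : Type*} [CommRing K] [AddCommGroup U] [Module K U] [AddCommGroup V]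
  [Module K V] [AddCommGroup W] [Module K W] [Fintype ι] (B : Basis ι K U)

theorem sum_smulRight_coord (f : U →ₗ[K] W) : ∑ i, (B.coord i).smulRight (f (B i)) = f := by
  ext u
  conv_rhs => rw [← B.sum_repr u, map_sum]
  simp [map_smul]

variable {φ : Dual K V} {v : V}

theorem sum_smulRight_comp_smulRight (hφv : φ v = 1) (f : U →ₗ[K] W) :
    ∑ i, φ.smulRight (f (B i)) ∘ₗ (B.coord i).smulRight v = f := by
  simp only [LinearMap.smulRight_comp_smulRight, hφv, one_smul, B.sum_smulRight_coord]

variable {Z : Type*} [AddCommGroup Z] [Module K Z]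

variable (φ v) in
noncomputable def balancedLift (b : (V →ₗ[K] W) →ₗ[K] (U →ₗ[K] V) →ₗ[K] Z) :
    (U →ₗ[K] W) →ₗ[K] Z :=
  ∑ i, b.flip ((B.coord i).smulRight v) ∘ₗ LinearMap.smulRightₗ φ ∘ₗ LinearMap.applyₗ (B i)

theorem balancedLift_comp (hφv : φ v = 1) (b : (V →ₗ[K] W) →ₗ[K] (U →ₗ[K] V) →ₗ[K] Z)
    (hb : ∀ (e : Module.End K V) (g : V →ₗ[K] W) (h : U →ₗ[K] V), b (g ∘ₗ e) h = b g (e ∘ₗ h))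
    (g : V →ₗ[K] W) (h : U →ₗ[K] V) : B.balancedLift φ v b (g ∘ₗ h) = b g h := by
  simp only [balancedLift, LinearMap.sum_apply, LinearMap.comp_apply, LinearMap.applyₗ_apply_apply,
    LinearMap.smulRightₗ_apply, LinearMap.flip_apply]
  calc ∑ i, b (φ.smulRight (g (h (B i)))) ((B.coord i).smulRight v)
      = ∑ i, b g (φ.smulRight (h (B i)) ∘ₗ (B.coord i).smulRight v) :=
        Finset.sum_congr rfl fun i _ => by rw [← LinearMap.comp_smulRight g, hb]
    _ = b g h := by rw [← map_sum, B.sum_smulRight_comp_smulRight hφv]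

end Module.Basis

theorem LinearMap.ext_on_comp {K U V W Z : Type*} [CommRing K] [AddCommGroup U] [Module K U]
    [Module.Free K U] [Module.Finite K U] [AddCommGroup V] [Module K V] [AddCommGroup W]
    [Module K W] [AddCommGroup Z] [Module K Z] {φ : Dual K V} {v : V} (hφv : φ v = 1)
    {F G : (U →ₗ[K] W) →ₗ[K] Z}
    (hFG : ∀ (g : V →ₗ[K] W) (h : U →ₗ[K] V), F (g ∘ₗ h) = G (g ∘ₗ h)) :
    F = G := by
  ext f
  rw [← (Free.chooseBasis K U).sum_smulRight_comp_smulRight hφv f]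
  simp only [map_sum, hFG]

theorem stmt_9_general (K : Type*) [Field K] (U V W : Type*)
    [AddCommGroup U] [Module K U] [AddCommGroup V] [Module K V]
    [AddCommGroup W] [Module K W]
    [FiniteDimensional K U]
    [Nontrivial V]
    (Z : Type*) [AddCommGroup Z] [Module K Z]
    (b : (V →ₗ[K] W) →ₗ[K] (U →ₗ[K] V) →ₗ[K] Z)
    (hb : ∀ (e : Module.End K V) (g : V →ₗ[K] W) (h : U →ₗ[K] V),
      b (g ∘ₗ e) h = b g (e ∘ₗ h)) :
    ∃! F : (U →ₗ[K] W) →ₗ[K] Z,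
      ∀ (g : V →ₗ[K] W) (h : U →ₗ[K] V), F (g ∘ₗ h) = b g h := by
  obtain ⟨v, hv⟩ := exists_ne (0 : V)
  obtain ⟨φ, hφv⟩ := Projective.exists_dual_eq_one K hv
  let B := Module.finBasis K U
  refine ⟨B.balancedLift φ v b, B.balancedLift_comp hφv b hb, fun F hF => ?_⟩
  exact LinearMap.ext_on_comp hφv fun g h => by rw [hF, B.balancedLift_comp hφv b hb]

/-- Composition exhibits `Hom_K(U, W)` as the balanced tensor product
`Hom_K(V, W) ⊗_{End_K(V)} Hom_K(U, V)`: every `End_K(V)`-balanced bilinear map out of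
`Hom_K(V, W) × Hom_K(U, V)` factors uniquely through composition. -/
theorem stmt_9 (K : Type*) [Field K] (U V W : Type*)
    [AddCommGroup U] [Module K U] [AddCommGroup V] [Module K V]
    [AddCommGroup W] [Module K W]
    [FiniteDimensional K U] [FiniteDimensional K V] [FiniteDimensional K W]
    [Nontrivial V]
    (Z : Type*) [AddCommGroup Z] [Module K Z]
    (b : (V →ₗ[K] W) →ₗ[K] (U →ₗ[K] V) →ₗ[K] Z)
    (hb : ∀ (e : Module.End K V) (g : V →ₗ[K] W) (h : U →ₗ[K] V),
      b (g ∘ₗ e) h = b g (e ∘ₗ h)) :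
    ∃! F : (U →ₗ[K] W) →ₗ[K] Z,
      ∀ (g : V →ₗ[K] W) (h : U →ₗ[K] V), F (g ∘ₗ h) = b g h :=
  stmt_9_general K U V W Z b hb
end

section
/- Let C be a braided monoidal category with braiding β, and let X be an object admitting a right dual X* (with coevaluation η_X : 𝟙 → X ⊗ X* and evaluation ε_X : X* ⊗ X → 𝟙 satisfying the zigzag identities) such that X* also admits a right dual X** (with coevaluation η_{X*} : 𝟙 → X* ⊗ X** and evaluation ε_{X*} : X** ⊗ X* → 𝟙). Define u : X** → X as the composite X** ≅ X** ⊗ 𝟙 → X** ⊗ (X ⊗ X*) [using η_X] ≅ (X** ⊗ X) ⊗ X* → (X ⊗ X**) ⊗ X* [using β_{X**,X} ⊗ id] ≅ X ⊗ (X** ⊗ X*) → X ⊗ 𝟙 ≅ X [using ε_{X*}], and define v : X → X** as the composite X ≅ 𝟙 ⊗ X → (X* ⊗ X**) ⊗ X [using η_{X*}] ≅ X* ⊗ (X** ⊗ X) → X* ⊗ (X ⊗ X**) [using id ⊗ β⁻¹_{X,X**}] ≅ (X* ⊗ X) ⊗ X** → 𝟙 ⊗ X** ≅ X** [using ε_X].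 Then u and v are mutually inverse: u ∘ v = id_X and v ∘ u = id_{X**}. In particular the double dual X** is isomorphic to X. -/
/-!
Through the braiding, `X` is also a right dual of `X*` (`exactPairing_swap`), so `X` and `X**`
are two right duals of `X*` and `rightDualIso` relates them. Sliding the braiding past the
unit object and expanding it with a hexagon identity shows that the two components of this
isomorphism are exactly `v` and `u`.
-/

namespace CategoryTheory

open MonoidalCategory BraidedCategory

variable {C : Type*} [Category C] [MonoidalCategory C] [BraidedCategory C]

theorem rightDualIso_exactPairing_swap_hom (X Y Z : C) [ExactPairing X Y] [ExactPairing Y Z] :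
    (rightDualIso (exactPairing_swap X Y) (inferInstance : ExactPairing Y Z)).hom =
      (λ_ X).inv ≫ η_ Y Z ▷ X ≫ (α_ Y Z X).hom ≫ Y ◁ (β_ X Z).inv ≫ (α_ Y X Z).inv ≫
        ε_ X Y ▷ Z ≫ (λ_ Z).hom := by
  change (ρ_ X).inv ≫ X ◁ η_ Y Z ≫ X ◁ 𝟙 Y ▷ Z ≫ (α_ X Y Z).inv ≫
    ((β_ X Y).hom ≫ ε_ X Y) ▷ Z ≫ (λ_ Z).hom = _
  rw [← rightUnitor_inv_braiding_assoc, ← braiding_naturality_right_assoc,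
    braiding_tensor_right_hom]
  simp

theorem rightDualIso_exactPairing_swap_inv (X Y Z : C) [ExactPairing X Y] [ExactPairing Y Z] :
    (rightDualIso (exactPairing_swap X Y) (inferInstance : ExactPairing Y Z)).inv =
      (ρ_ Z).inv ≫ Z ◁ η_ X Y ≫ (α_ Z X Y).inv ≫ (β_ Z X).hom ▷ Y ≫ (α_ X Z Y).hom ≫
        X ◁ ε_ Y Z ≫ (ρ_ X).hom := by
  change (ρ_ Z).inv ≫ Z ◁ (η_ X Y ≫ (β_ Y X).inv) ≫ Z ◁ 𝟙 Y ▷ X ≫ (α_ Z Y X).inv ≫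
    ε_ Y Z ▷ X ≫ (λ_ X).hom = _
  rw [← braiding_rightUnitor, braiding_naturality_left_assoc,
    braiding_tensor_left_hom]
  simp

end CategoryTheory

open CategoryTheory MonoidalCategory

/-- In a braided monoidal category with duals, the braiding determines an isomorphism
between the double dual `X**` and `X`, with explicit mutually inverse morphisms `u`
and `v` built from the braiding and the duality data. -/
theorem stmt_14 (C : Type*) [Category C] [MonoidalCategory C] [BraidedCategory C]
    (X X' X'' : C)
    (η₁ : 𝟙_ C ⟶ X ⊗ X') (ε₁ : X' ⊗ X ⟶ 𝟙_ C)
    (zig₁ : η₁ ▷ X ≫ (α_ X X' X).hom ≫ X ◁ ε₁ = (λ_ X).hom ≫ (ρ_ X).inv)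
    (zig₂ : X' ◁ η₁ ≫ (α_ X' X X').inv ≫ ε₁ ▷ X' = (ρ_ X').hom ≫ (λ_ X').inv)
    (η₂ : 𝟙_ C ⟶ X' ⊗ X'') (ε₂ : X'' ⊗ X' ⟶ 𝟙_ C)
    (zig₃ : η₂ ▷ X' ≫ (α_ X' X'' X').hom ≫ X' ◁ ε₂ = (λ_ X').hom ≫ (ρ_ X').inv)
    (zig₄ : X'' ◁ η₂ ≫ (α_ X'' X' X'').inv ≫ ε₂ ▷ X'' = (ρ_ X'').hom ≫ (λ_ X'').inv)
    (u : X'' ⟶ X) (v : X ⟶ X'')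
    (hu : u = (ρ_ X'').inv ≫ (X'' ◁ η₁) ≫ (α_ X'' X X').inv ≫
      ((β_ X'' X).hom ▷ X') ≫ (α_ X X'' X').hom ≫ (X ◁ ε₂) ≫ (ρ_ X).hom)
    (hv : v = (λ_ X).inv ≫ (η₂ ▷ X) ≫ (α_ X' X'' X).hom ≫
      (X' ◁ (β_ X X'').inv) ≫ (α_ X' X X'').inv ≫ (ε₁ ▷ X'') ≫ (λ_ X'').hom) :
    v ≫ u = 𝟙 X ∧ u ≫ v = 𝟙 X'' := by
  let p₁ : ExactPairing X X' := ⟨η₁, ε₁, zig₂, zig₁⟩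
  let p₂ : ExactPairing X' X'' := ⟨η₂, ε₂, zig₄, zig₃⟩
  obtain rfl : v = (rightDualIso (BraidedCategory.exactPairing_swap X X') p₂).hom :=
    hv.trans (rightDualIso_exactPairing_swap_hom X X' X'').symm
  obtain rfl : u = (rightDualIso (BraidedCategory.exactPairing_swap X X') p₂).inv :=
    hu.trans (rightDualIso_exactPairing_swap_inv X X' X'').symm
  exact ⟨Iso.hom_inv_id _, Iso.inv_hom_id _⟩
end
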